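/- arXiv:1509.02771 — 10 statements merged into one kernel-verified Lean document; each statement's English description precedes it below -/
import Mathlib

section
/- Let a₋ > 0, a₊ > 0 and A, B ∈ ℝ, and let θ₁ and θ₃ each be either the identity function on ℝ or the function h. Then there exists a unique pair (ε₁, ε₃) ∈ ℝ × ℝ such that ε₃ − ε₁ = A and a₋·θ₁(ε₁) + a₊·θ₃(ε₃) = B. -/
/-!
Substituting `ε₃ = ε₁ + A` leaves the single equation `a₋ θ₁(ε₁) + a₊ θ₃(ε₁ + A) = B`. Both
`id` and `h` are increasing bijections of `ℝ`; a monotone surjection of `ℝ` is continuous and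
tends to `±∞`, so the left-hand side is a continuous, strictly increasing function of `ε₁`
tending to `±∞`, i.e. a bijection.
-/

noncomputable def hFun (ε : ℝ) : ℝ := if 0 ≤ ε then ε else Real.sinh ε

open Filter Function

lemma hFun_eq_min (ε : ℝ) : hFun ε = min ε (Real.sinh ε) := by
  unfold hFun
  split_ifs with h
  · exact (min_eq_left (Real.self_le_sinh_iff.mpr h)).symm
  · exact (min_eq_right (Real.sinh_le_self_iff.mpr (not_le.mp h).le)).symm

lemma strictMono_hFun : StrictMono hFun := fun a b hab => by
  simpa only [hFun_eq_min] using min_lt_min hab (Real.sinh_lt_sinh.mpr hab)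

lemma surjective_hFun : Surjective hFun := by
  intro y
  rcases le_or_gt 0 y with hy | hy
  · exact ⟨y, if_pos hy⟩
  · refine ⟨Real.arsinh y, ?_⟩
    rw [hFun, if_neg (not_le.mpr (Real.arsinh_neg_iff.mpr hy)), Real.sinh_arsinh]

section OrderAutomorphisms

variable {f g : ℝ → ℝ} {a b : ℝ}

lemma Monotone.tendsto_atTop_atTop_of_surjective (hf : Monotone f) (hf' : Surjective f) :
    Tendsto f atTop atTop :=
  hf.tendsto_atTop_atTop fun y => (hf' y).imp fun _ h => h.ge

lemma Monotone.tendsto_atBot_atBot_of_surjective (hf : Monotone f) (hf' : Surjective f) :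
    Tendsto f atBot atBot :=
  hf.tendsto_atBot_atBot fun y => (hf' y).imp fun _ h => h.le

lemma surjective_mul_add_mul_comp_add (hf : Monotone f) (hf' : Surjective f) (hg : Monotone g)
    (hg' : Surjective g) (ha : 0 < a) (hb : 0 < b) (A : ℝ) :
    Surjective fun x => a * f x + b * g (x + A) := by
  have hg_shift : Monotone fun x => g (x + A) := hg.comp fun x y hxy => add_le_add_left hxy A
  have hg_shift' : Surjective fun x => g (x + A) := hg'.comp (add_right_surjective A)
  refine Continuous.surjective ((continuous_const.mul (hf.continuous_of_surjective hf')).add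
    (continuous_const.mul (hg_shift.continuous_of_surjective hg_shift'))) ?_ ?_
  · exact ((hf.tendsto_atTop_atTop_of_surjective hf').const_mul_atTop ha).atTop_add_atTop
      ((hg_shift.tendsto_atTop_atTop_of_surjective hg_shift').const_mul_atTop hb)
  · exact ((hf.tendsto_atBot_atBot_of_surjective hf').const_mul_atBot ha).atBot_add_atBot
      ((hg_shift.tendsto_atBot_atBot_of_surjective hg_shift').const_mul_atBot hb)

lemma strictMono_mul_add_mul_comp_add (hf : StrictMono f) (hg : Monotone g) (ha : 0 < a)
    (hb : 0 ≤ b) (A : ℝ) : StrictMono fun x => a * f x + b * g (x + A) := fun x y hxy =>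
  add_lt_add_of_lt_of_le (mul_lt_mul_of_pos_left (hf hxy) ha)
    (mul_le_mul_of_nonneg_left (hg (by linarith)) hb)

theorem existsUnique_sub_eq_and_mul_add_mul_eq (hf : StrictMono f) (hf' : Surjective f)
    (hg : Monotone g) (hg' : Surjective g) (ha : 0 < a) (hb : 0 < b) (A B : ℝ) :
    ∃! p : ℝ × ℝ, p.2 - p.1 = A ∧ a * f p.1 + b * g p.2 = B := by
  obtain ⟨x, hx⟩ := surjective_mul_add_mul_comp_add hf.monotone hf' hg hg' ha hb A B
  refine ⟨(x, x + A), ⟨add_sub_cancel_left x A, hx⟩, ?_⟩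
  rintro ⟨y₁, y₂⟩ ⟨hA, hB⟩
  obtain rfl : y₂ = y₁ + A := by simp only at hA; linarith
  obtain rfl : y₁ = x := (strictMono_mul_add_mul_comp_add hf hg ha hb.le A).injective
    (hB.trans hx.symm)
  rfl

end OrderAutomorphisms

/-- Proposition 3.1 (Prop. `prop:RP`): for any choice of θ₁, θ₃ ∈ {id, h}, any a₋, a₊ > 0
and any A, B ∈ ℝ, there exists a unique pair (ε₁, ε₃) with ε₃ − ε₁ = A and
a₋·θ₁(ε₁) + a₊·θ₃(ε₃) = B. -/
theorem statement0 (aminus aplus : ℝ) (haminus : 0 < aminus) (haplus : 0 < aplus)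
    (A B : ℝ) (θ₁ θ₃ : ℝ → ℝ)
    (hθ₁ : θ₁ = id ∨ θ₁ = hFun) (hθ₃ : θ₃ = id ∨ θ₃ = hFun) :
    ∃! p : ℝ × ℝ, p.2 - p.1 = A ∧ aminus * θ₁ p.1 + aplus * θ₃ p.2 = B := by
  have h_admissible : ∀ θ : ℝ → ℝ, θ = id ∨ θ = hFun → StrictMono θ ∧ Surjective θ := by
    rintro θ (rfl | rfl)
    · exact ⟨strictMono_id, surjective_id⟩
    · exact ⟨strictMono_hFun, surjective_hFun⟩
  obtain ⟨hθ₁_mono, hθ₁_surj⟩ := h_admissible θ₁ hθ₁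
  obtain ⟨hθ₃_mono, hθ₃_surj⟩ := h_admissible θ₃ hθ₃
  exact existsUnique_sub_eq_and_mul_add_mul_eq hθ₁_mono hθ₁_surj hθ₃_mono.monotone hθ₃_surj
    haminus haplus A B
end

section
/- Let a₋, a₊ > 0 with a₊ > a₋, and set δ = 2(a₊ − a₋)/(a₊ + a₋) > 0. For δ₃ ∈ ℝ, let (ε₁, ε₃) be the unique pair of reals satisfying ε₃ − ε₁ = δ₃ and a₋·ε₁ + a₊·h(ε₃) = a₋·h(δ₃). Then ε₃ has the same sign as δ₃ (ε₃ > 0 if δ₃ > 0, ε₃ < 0 if δ₃ < 0, ε₃ = 0 if δ₃ = 0) and ε₁ has the opposite sign of δ₃. Moreover, if δ₃ ≥ 0 then ε₁ = −δ₃·δ/2. -/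
/-- Signs of the waves produced by the pre-Riemann solver `R_{IL}` when a 3-wave of
strength δ₃ crosses a phase interface of strength δ > 0. -/
theorem statement2 (aminus aplus : ℝ) (haminus : 0 < aminus) (haplus : 0 < aplus)
    (hlt : aminus < aplus) (δ δ₃ ε₁ ε₃ : ℝ)
    (hδ : δ = 2 * (aplus - aminus) / (aplus + aminus))
    (h1 : ε₃ - ε₁ = δ₃)
    (h2 : aminus * ε₁ + aplus * hFun ε₃ = aminus * hFun δ₃) :
    (0 < δ₃ → 0 < ε₃) ∧ (δ₃ < 0 → ε₃ < 0) ∧ (δ₃ = 0 → ε₃ = 0) ∧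
    (0 < δ₃ → ε₁ < 0) ∧ (δ₃ < 0 → 0 < ε₁) ∧ (δ₃ = 0 → ε₁ = 0) ∧
    (0 ≤ δ₃ → ε₁ = -δ₃ * δ / 2) := by
  have hsum : 0 < aplus + aminus := by linarith
  -- Case analysis on sign of δ₃
  rcases le_or_gt 0 δ₃ with hd | hd
  · -- δ₃ ≥ 0 : show ε₃ ≥ 0 first
    have hfd : hFun δ₃ = δ₃ := if_pos hd
    have hε₃ : 0 ≤ ε₃ := by
      by_contra hneg
      push_neg at hneg
      have hf : hFun ε₃ = Real.sinh ε₃ := if_neg (not_le.mpr hneg)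
      have hs : Real.sinh ε₃ < 0 := Real.sinh_neg_iff.mpr hneg
      rw [hf, hfd] at h2
      nlinarith [mul_pos haplus (neg_pos.mpr hs), mul_nonneg haminus.le hd]
    have hf : hFun ε₃ = ε₃ := if_pos hε₃
    rw [hf, hfd] at h2
    have hε₃eq : ε₃ = 2 * aminus * δ₃ / (aplus + aminus) := by
      field_simp
      nlinarith [h1]
    have hε₁eq : ε₁ = -δ₃ * δ / 2 := by
      rw [hδ]
      have : ε₁ = ε₃ - δ₃ := by linarith
      rw [this, hε₃eq]
      field_simp
      ring
    refine ⟨fun h => ?_, fun h => absurd hd (not_le.mpr h), fun h => ?_,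
      fun h => ?_, fun h => absurd hd (not_le.mpr h), fun h => ?_, fun _ => hε₁eq⟩
    · rw [hε₃eq]; exact div_pos (by nlinarith) hsum
    · rw [hε₃eq, h]; ring
    · rw [hε₁eq]
      have hδpos : 0 < δ := by
        rw [hδ]; exact div_pos (by linarith) hsum
      have : 0 < δ₃ * δ / 2 := div_pos (mul_pos h hδpos) two_pos
      linarith
    · have : ε₃ = 0 := by rw [hε₃eq, h]; ring
      linarith
  · -- δ₃ < 0
    have hfd : hFun δ₃ = Real.sinh δ₃ := if_neg (not_le.mpr hd)
    have hsd : Real.sinh δ₃ < 0 := Real.sinh_neg_iff.mpr hd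
    have hε₃ : ε₃ < 0 := by
      by_contra hge
      push_neg at hge
      have hf : hFun ε₃ = ε₃ := if_pos hge
      rw [hf, hfd] at h2
      nlinarith [mul_nonneg haplus.le hge, mul_pos haminus (neg_pos.mpr hsd),
        mul_pos haminus (neg_pos.mpr hd)]
    have hf : hFun ε₃ = Real.sinh ε₃ := if_neg (not_le.mpr hε₃)
    rw [hf, hfd] at h2
    have hε₁ : 0 < ε₁ := by
      by_contra hle
      push_neg at hle
      have h3 : ε₃ ≤ δ₃ := by linarith
      have hmono : Real.sinh ε₃ ≤ Real.sinh δ₃ := by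
        rcases eq_or_lt_of_le h3 with h | h
        · rw [h]
        · exact (Real.sinh_lt_sinh.mpr h).le
      nlinarith [mul_pos (sub_pos.mpr hlt) (neg_pos.mpr hsd),
        mul_nonneg haplus.le (sub_nonneg.mpr hmono), mul_nonneg haminus.le (neg_nonneg.mpr hle)]
    exact ⟨fun h => absurd h (not_lt.mpr hd.le), fun _ => hε₃, fun h => absurd h hd.ne,
      fun h => absurd h (not_lt.mpr hd.le), fun _ => hε₁, fun h => absurd h hd.ne,
      fun h => absurd h (not_le.mpr hd)⟩
end

section
/- Let a₋, a₊ > 0 with a₊ > a₋, and set δ = 2(a₊ − a₋)/(a₊ + a₋) > 0. For δ₁ ∈ ℝ, let (ε₁, ε₃) be the unique pair of reals satisfying ε₃ − ε₁ = −δ₁ and a₋·h(ε₁) + a₊·ε₃ = a₊·h(δ₁). Then ε₁ has the same sign as δ₁ and ε₃ has the same sign as δ₁. Moreover, if δ₁ ≥ 0 then ε₃ = δ₁·δ/2. -/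
lemma hFun_of_nonneg {ε : ℝ} (h : 0 ≤ ε) : hFun ε = ε := if_pos h

lemma hFun_of_neg {ε : ℝ} (h : ε < 0) : hFun ε = Real.sinh ε := if_neg (not_le.mpr h)

/-- Signs of the waves produced by the pre-Riemann solver `R_{LI}` when a 1-wave of
strength δ₁ crosses a phase interface of strength δ > 0. -/
theorem statement3 (aminus aplus : ℝ) (haminus : 0 < aminus) (haplus : 0 < aplus)
    (hlt : aminus < aplus) (δ δ₁ ε₁ ε₃ : ℝ)
    (hδ : δ = 2 * (aplus - aminus) / (aplus + aminus))
    (h1 : ε₃ - ε₁ = -δ₁)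
    (h2 : aminus * hFun ε₁ + aplus * ε₃ = aplus * hFun δ₁) :
    (0 < δ₁ → 0 < ε₁) ∧ (δ₁ < 0 → ε₁ < 0) ∧ (δ₁ = 0 → ε₁ = 0) ∧
    (0 < δ₁ → 0 < ε₃) ∧ (δ₁ < 0 → ε₃ < 0) ∧ (δ₁ = 0 → ε₃ = 0) ∧
    (0 ≤ δ₁ → ε₃ = δ₁ * δ / 2) := by
  have hsum : 0 < aplus + aminus := by linarith
  -- ε₁ sign, positive case
  have he1pos : 0 < δ₁ → 0 < ε₁ := by
    intro hd
    by_contra hc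
    push_neg at hc
    have hh1 : hFun ε₁ ≤ 0 := by
      rcases lt_or_eq_of_le hc with h | h
      · rw [hFun_of_neg h]; exact le_of_lt (Real.sinh_neg_iff.mpr h)
      · simp [h, hFun]
    rw [hFun_of_nonneg hd.le] at h2
    nlinarith
  -- ε₁ sign, zero case
  have he1zero : δ₁ = 0 → ε₁ = 0 := by
    intro hd
    subst hd
    have he : ε₃ = ε₁ := by linarith
    rw [hFun_of_nonneg le_rfl, he] at h2
    by_contra hc
    rcases lt_or_gt_of_ne hc with h | h
    · rw [hFun_of_neg h] at h2
      have := Real.sinh_neg_iff.mpr h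
      nlinarith
    · rw [hFun_of_nonneg h.le] at h2
      nlinarith
  -- ε₁ sign, negative case
  have he1neg : δ₁ < 0 → ε₁ < 0 := by
    intro hd
    by_contra hc
    push_neg at hc
    rw [hFun_of_nonneg hc, hFun_of_neg hd] at h2
    have hs : Real.sinh δ₁ < 0 := Real.sinh_neg_iff.mpr hd
    have he3 : 0 < ε₃ := by linarith
    nlinarith
  -- ε₃ formula for δ₁ ≥ 0
  have hform : 0 ≤ δ₁ → ε₃ = δ₁ * δ / 2 := by
    intro hd
    have he1 : 0 ≤ ε₁ := by
      rcases lt_or_eq_of_le hd with h | h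
      · exact (he1pos h).le
      · rw [he1zero h.symm]
    rw [hFun_of_nonneg he1, hFun_of_nonneg hd] at h2
    have he1e : ε₁ = ε₃ + δ₁ := by linarith
    rw [he1e] at h2
    have : (aplus + aminus) * ε₃ = (aplus - aminus) * δ₁ := by ring_nf; ring_nf at h2; linarith
    rw [hδ]
    field_simp
    linarith
  -- ε₃ positive case
  have he3pos : 0 < δ₁ → 0 < ε₃ := by
    intro hd
    rw [hform hd.le, hδ]
    have : 0 < aplus - aminus := by linarith
    positivity
  -- ε₃ negative case
  have he3neg : δ₁ < 0 → ε₃ < 0 := by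
    intro hd
    have he1 := he1neg hd
    rw [hFun_of_neg he1, hFun_of_neg hd] at h2
    by_contra hc
    push_neg at hc
    have hle : δ₁ ≤ ε₁ := by linarith
    have hs : Real.sinh δ₁ ≤ Real.sinh ε₁ := by
      rcases lt_or_eq_of_le hle with h | h
      · exact (Real.sinh_lt_sinh.mpr h).le
      · rw [h]
    have hs2 : Real.sinh δ₁ < 0 := Real.sinh_neg_iff.mpr hd
    nlinarith
  exact ⟨he1pos, he1neg, he1zero, he3pos, he3neg,
    fun h => by rw [hform (le_of_eq h.symm), h]; ring, hform⟩
end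

section
/- Let k > 1, ρ > 0 and δ₁ ∈ (−ρ, 0). Let ε₃ ∈ ℝ satisfy k·(ε₃ + δ₁) + sinh(ε₃ + δ₁) = k·(sinh δ₁ + δ₁). Then ε₃ < 0 and |ε₃| ≤ ((k−1)/(k+1))·sinh|δ₁| ≤ ((k−1)/(k+1))·(sinh ρ / ρ)·|δ₁|. -/
/-!
Write the interface relation as `k ε₃ + sinh (ε₃ + δ₁) = k sinh δ₁`. Since `sinh` is increasing
and `k sinh δ₁ < sinh δ₁`, the reflected wave `ε₃` must be negative. Because `sinh x - x` is
increasing, `sinh (ε₃ + δ₁) - sinh δ₁ ≤ ε₃`, which turns the relation into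
`(k - 1) sinh δ₁ ≤ (k + 1) ε₃`. Finally, convexity of `sinh` on `[0, ∞)` with `sinh 0 = 0`
bounds `sinh t` by the chord `t · sinh ρ / ρ` for `0 ≤ t ≤ ρ`.
-/

open Real

lemma convexOn_sinh_Ici : ConvexOn ℝ (Set.Ici 0) sinh := by
  refine MonotoneOn.convexOn_of_deriv (convex_Ici 0) continuous_sinh.continuousOn
    differentiable_sinh.differentiableOn ?_
  rw [Real.deriv_sinh, interior_Ici]
  exact cosh_strictMonoOn.monotoneOn.mono Set.Ioi_subset_Ici_self

lemma sinh_le_sinh_div_mul {t ρ : ℝ} (ht : 0 ≤ t) (htρ : t ≤ ρ) : sinh t ≤ sinh ρ / ρ * t := by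
  rcases ht.eq_or_lt with rfl | ht
  · simp
  have hρ : 0 < ρ := ht.trans_le htρ
  have hslope := convexOn_sinh_Ici.secant_mono (a := 0) Set.self_mem_Ici ht.le hρ.le
    ht.ne' hρ.ne' htρ
  simp only [sinh_zero, sub_zero] at hslope
  rwa [div_le_iff₀ ht] at hslope

section ReflectedWave

variable {k δ ε : ℝ}

lemma reflected_wave_neg (hk : 1 < k) (hδ : δ < 0)
    (hwave : k * ε + sinh (ε + δ) = k * sinh δ) : ε < 0 := by
  by_contra! hε
  have hsinh_mono : sinh δ ≤ sinh (ε + δ) := sinh_le_sinh.2 (by linarith)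
  nlinarith [sinh_neg_iff.2 hδ]

lemma neg_reflected_wave_le (hk : -1 < k) (hε : ε ≤ 0)
    (hwave : k * ε + sinh (ε + δ) = k * sinh δ) : -ε ≤ (k - 1) / (k + 1) * sinh (-δ) := by
  have hsinh_sub : sinh (ε + δ) - sinh δ ≤ ε := by
    linarith [sinh_sub_id_strictMono.monotone (show ε + δ ≤ δ by linarith)]
  rw [sinh_neg, div_mul_eq_mul_div, le_div_iff₀ (by linarith)]
  linarith

end ReflectedWave

theorem statement5_general (k ρ δ₁ ε₃ : ℝ) (hk : 1 < k)
    (hδ₁ : -ρ < δ₁ ∧ δ₁ < 0)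
    (heq : k * (ε₃ + δ₁) + Real.sinh (ε₃ + δ₁) = k * (Real.sinh δ₁ + δ₁)) :
    ε₃ < 0 ∧ |ε₃| ≤ (k - 1) / (k + 1) * Real.sinh |δ₁| ∧
      (k - 1) / (k + 1) * Real.sinh |δ₁| ≤ (k - 1) / (k + 1) * (Real.sinh ρ / ρ) * |δ₁| := by
  obtain ⟨hδρ, hδ⟩ := hδ₁
  have hwave : k * ε₃ + sinh (ε₃ + δ₁) = k * sinh δ₁ := by linarith
  have hε : ε₃ < 0 := reflected_wave_neg hk hδ hwave
  have hcoeff : 0 ≤ (k - 1) / (k + 1) := div_nonneg (by linarith) (by linarith)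
  refine ⟨hε, ?_, ?_⟩
  · rw [abs_of_neg hε, abs_of_neg hδ]
    exact neg_reflected_wave_le (by linarith) hε.le hwave
  · rw [mul_assoc]
    exact mul_le_mul_of_nonneg_left
      (sinh_le_sinh_div_mul (abs_nonneg δ₁) (by rw [abs_of_neg hδ]; linarith)) hcoeff

/-- Reflected-wave estimate for the simplified solver: if a 1-shock of strength
δ₁ ∈ (−ρ, 0) hits a phase interface with ratio k > 1, the reflected wave ε₃ satisfies
ε₃ < 0 and |ε₃| ≤ ((k−1)/(k+1))·sinh|δ₁| ≤ ((k−1)/(k+1))·(sinh ρ / ρ)·|δ₁|. -/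
theorem statement5 (k ρ δ₁ ε₃ : ℝ) (hk : 1 < k) (hρ : 0 < ρ)
    (hδ₁ : -ρ < δ₁ ∧ δ₁ < 0)
    (heq : k * (ε₃ + δ₁) + Real.sinh (ε₃ + δ₁) = k * (Real.sinh δ₁ + δ₁)) :
    ε₃ < 0 ∧ |ε₃| ≤ (k - 1) / (k + 1) * Real.sinh |δ₁| ∧
      (k - 1) / (k + 1) * Real.sinh |δ₁| ≤ (k - 1) / (k + 1) * (Real.sinh ρ / ρ) * |δ₁| :=
  statement5_general k ρ δ₁ ε₃ hk hδ₁ heq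
end

section
/- Let α < 0 and β < 0, and let (ε₁, ε₃) be the unique pair of reals satisfying ε₃ − ε₁ = α + β and h(ε₁) + h(ε₃) = h(α) + h(β). Then ε₁ > 0 and ε₃ < min{α, β}; in particular |ε₃| > max{|α|, |β|}. -/
lemma sinh_add_lt (α β : ℝ) (hα : α < 0) (hβ : β < 0) :
    Real.sinh (α + β) < Real.sinh α + Real.sinh β := by
  rw [Real.sinh_add]
  have h1 : Real.sinh α < 0 := by
    have := Real.sinh_lt_sinh.mpr hα; simpa using this
  have h2 : Real.sinh β < 0 := by
    have := Real.sinh_lt_sinh.mpr hβ; simpa using this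
  have c1 : 1 < Real.cosh α := Real.one_lt_cosh.mpr (ne_of_lt hα)
  have c2 : 1 < Real.cosh β := Real.one_lt_cosh.mpr (ne_of_lt hβ)
  nlinarith

/-- Interaction of two 3-shocks of strengths α, β < 0: the outgoing 3-wave ε₃ is a shock
larger than each incoming one and the reflected 1-wave ε₁ is a rarefaction. -/
theorem statement6 (α β ε₁ ε₃ : ℝ) (hα : α < 0) (hβ : β < 0)
    (h1 : ε₃ - ε₁ = α + β)
    (h2 : hFun ε₁ + hFun ε₃ = hFun α + hFun β) :
    0 < ε₁ ∧ ε₃ < min α β ∧ |ε₃| > max |α| |β| := by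
  have hsa : Real.sinh α < 0 := by
    have := Real.sinh_lt_sinh.mpr hα; simpa using this
  have hsb : Real.sinh β < 0 := by
    have := Real.sinh_lt_sinh.mpr hβ; simpa using this
  rw [show hFun α = Real.sinh α from if_neg (not_le.mpr hα),
      show hFun β = Real.sinh β from if_neg (not_le.mpr hβ)] at h2
  -- Step 1: ε₃ < 0
  have hε₃ : ε₃ < 0 := by
    by_contra h
    push_neg at h
    have hε₁ : 0 ≤ ε₁ := by linarith
    rw [show hFun ε₁ = ε₁ from if_pos hε₁, show hFun ε₃ = ε₃ from if_pos h] at h2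
    linarith
  rw [show hFun ε₃ = Real.sinh ε₃ from if_neg (not_le.mpr hε₃)] at h2
  -- Step 2: ε₁ > 0
  have hε₁ : 0 < ε₁ := by
    by_contra h
    push_neg at h
    have hle : hFun ε₁ ≤ 0 := by
      unfold hFun; split_ifs with hh
      · exact h
      · exact le_of_lt (by simpa using Real.sinh_lt_sinh.mpr (not_le.mp hh))
    have h3 : ε₃ ≤ α + β := by linarith
    have h4 : Real.sinh ε₃ ≤ Real.sinh (α + β) := Real.sinh_le_sinh.mpr h3
    have h5 := sinh_add_lt α β hα hβ
    linarith
  rw [show hFun ε₁ = ε₁ from if_pos (le_of_lt hε₁)] at h2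
  have hα3 : ε₃ < α := by
    by_contra h
    push_neg at h
    have := Real.sinh_le_sinh.mpr h
    linarith
  have hβ3 : ε₃ < β := by
    by_contra h
    push_neg at h
    have := Real.sinh_le_sinh.mpr h
    linarith
  refine ⟨hε₁, lt_min hα3 hβ3, ?_⟩
  rw [abs_of_neg hε₃, abs_of_neg hα, abs_of_neg hβ]
  exact max_lt (by linarith) (by linarith)
end

section
/- Let a ∈ (0, 2) and b ∈ [0, 2) satisfy the stability condition max{(1 + b/2)·(a/2), (1 + a/2)·(b/2)} < 1. Then H(a, b) = 2 if and only if b = 2(2 − a)/(2 + a). -/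
/-- The function H of the two interface strengths. -/
noncomputable def Hfun (a b : ℝ) : ℝ :=
  max (b / (1 - (1 + b / 2) * (a / 2))) (a / (1 - (1 + a / 2) * (b / 2)))

/-- The 2-level set of H is the graph of a ↦ 2(2 − a)/(2 + a). -/
theorem statement10 (a b : ℝ) (ha : 0 < a ∧ a < 2) (hb : 0 ≤ b ∧ b < 2)
    (hstab : max ((1 + b / 2) * (a / 2)) ((1 + a / 2) * (b / 2)) < 1) :
    Hfun a b = 2 ↔ b = 2 * (2 - a) / (2 + a) := by
  obtain ⟨ha0, ha2⟩ := ha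
  obtain ⟨hb0, hb2⟩ := hb
  obtain ⟨hs1, hs2⟩ := max_lt_iff.mp hstab
  have hd1 : (0:ℝ) < 1 - (1 + b / 2) * (a / 2) := by linarith
  have hd2 : (0:ℝ) < 1 - (1 + a / 2) * (b / 2) := by linarith
  have h2a : (0:ℝ) < 2 + a := by linarith
  constructor
  · intro h
    rw [Hfun] at h
    rcases max_choice (b / (1 - (1 + b / 2) * (a / 2)))
        (a / (1 - (1 + a / 2) * (b / 2))) with hm | hm <;> rw [hm] at h
    · rw [div_eq_iff hd1.ne'] at h
      rw [eq_div_iff h2a.ne']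
      linear_combination 2 * h
    · rw [div_eq_iff hd2.ne'] at h
      rw [eq_div_iff h2a.ne']
      linear_combination 2 * h
  · intro h
    subst h
    rw [Hfun]
    have e1 : 2 * (2 - a) / (2 + a) / (1 - (1 + 2 * (2 - a) / (2 + a) / 2) * (a / 2)) = 2 := by
      rw [div_eq_iff hd1.ne']
      field_simp
      ring
    have e2 : a / (1 - (1 + a / 2) * (2 * (2 - a) / (2 + a) / 2)) = 2 := by
      rw [div_eq_iff hd2.ne']
      field_simp
      ring
    rw [e1, e2, max_self]
end

section
/- Let δ ∈ (0, √5 − 1] and k = (2 + δ)/(2 − δ), so that (k − 1)/(k + 1) = δ/2. Then for all x ≥ 0 and all y ≥ 0 satisfying k·y + sinh(x + y) = k·sinh x, one has y ≤ ((k − 1)/(k + 1))·x = (δ/2)·x. -/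
lemma aux_nonneg (f f' : ℝ → ℝ) (hf : ∀ x, HasDerivAt f (f' x) x)
    (h0 : f 0 = 0) (h' : ∀ x, 0 ≤ x → 0 ≤ f' x) :
    ∀ x, 0 ≤ x → 0 ≤ f x := by
  intro x hx
  have hmono : MonotoneOn f (Set.Ici 0) := by
    apply monotoneOn_of_deriv_nonneg (convex_Ici 0)
    · exact fun t _ => (hf t).continuousAt.continuousWithinAt
    · intro t ht
      exact ((hf t).differentiableAt).differentiableWithinAt
    · intro t ht
      rw [interior_Ici] at ht
      rw [(hf t).deriv]
      exact h' t ht.le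
  calc (0:ℝ) = f 0 := h0.symm
  _ ≤ f x := hmono Set.self_mem_Ici hx hx

lemma sinh_mul_ge (a : ℝ) (ha : 1 ≤ a) :
    ∀ x, 0 ≤ x → a * Real.sinh x ≤ Real.sinh (a * x) := by
  have key := aux_nonneg (fun x => Real.sinh (a*x) - a * Real.sinh x)
    (fun x => Real.cosh (a*x) * a - a * Real.cosh x)
    (fun x => ((Real.hasDerivAt_sinh (a*x)).comp x
        ((hasDerivAt_id x).const_mul a |>.congr_deriv (by ring))).sub
        ((Real.hasDerivAt_sinh x).const_mul a))
    (by simp)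
    (fun x hx => by
      have h1 : Real.cosh x ≤ Real.cosh (a*x) := by
        rw [Real.cosh_le_cosh]
        rw [abs_of_nonneg hx, abs_of_nonneg (by nlinarith)]
        nlinarith
      have h2 : 0 < Real.cosh x := Real.cosh_pos x
      show 0 ≤ Real.cosh (a*x) * a - a * Real.cosh x
      nlinarith)
  intro x hx
  have h := key x hx
  linarith

lemma keyH (c : ℝ) (hc0 : 0 < c) (hc1 : c + c^2 ≤ 1) :
    ∀ x, 0 ≤ x → 0 ≤ (1+c)*c*x + (1-c)*Real.sinh ((1+c)*x) - (1+c)*Real.sinh x := by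
  have ha : 1 ≤ 1 + c := by linarith
  have hc : c < 1 := by nlinarith
  have hds : ∀ x : ℝ, HasDerivAt (fun x => Real.sinh ((1+c)*x))
      (Real.cosh ((1+c)*x) * (1+c)) x :=
    fun x => (Real.hasDerivAt_sinh _).comp x
      (((hasDerivAt_id x).const_mul (1+c)).congr_deriv (by ring))
  have hdc : ∀ x : ℝ, HasDerivAt (fun x => Real.cosh ((1+c)*x))
      (Real.sinh ((1+c)*x) * (1+c)) x :=
    fun x => (Real.hasDerivAt_cosh _).comp x
      (((hasDerivAt_id x).const_mul (1+c)).congr_deriv (by ring))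
  have hH' : ∀ x, 0 ≤ x →
      0 ≤ (1+c)*c + (1-c)*(Real.cosh ((1+c)*x)*(1+c)) - (1+c)*Real.cosh x := by
    apply aux_nonneg _
      (fun x => 0 + (1-c)*(Real.sinh ((1+c)*x)*(1+c)*(1+c)) - (1+c)*Real.sinh x)
    · intro x
      exact ((hasDerivAt_const x ((1+c)*c)).add
        (((hdc x).mul_const (1+c)).const_mul (1-c))).sub
        ((Real.hasDerivAt_cosh x).const_mul (1+c))
    · simp [Real.cosh_zero]; ring
    · intro x hx
      have hs := sinh_mul_ge (1+c) ha x hx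
      have hsn : 0 ≤ Real.sinh x := Real.sinh_nonneg_iff.2 hx
      have h3 : 0 ≤ 1 - c - c^2 := by nlinarith
      have h4 : (0:ℝ) ≤ (1-c)*(1+c)^2 := by nlinarith
      nlinarith [mul_nonneg (mul_nonneg hsn h3) hc0.le,
        mul_le_mul_of_nonneg_left hs h4]
  apply aux_nonneg _
    (fun x => (1+c)*c*1 + (1-c)*(Real.cosh ((1+c)*x)*(1+c)) - (1+c)*Real.cosh x)
  · intro x
    exact ((((hasDerivAt_id x).const_mul ((1+c)*c))).add
      ((hds x).const_mul (1-c))).sub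
      ((Real.hasDerivAt_sinh x).const_mul (1+c))
  · simp
  · intro x hx
    have := hH' x hx
    linarith


/-- Sharp reflected-wave estimate (Lemma `lem:bestC0`, first part): for interface
strength δ ∈ (0, √5 − 1] (i.e. k = (2+δ)/(2−δ) ≤ 2+√5), every nonnegative solution y
of k·y + sinh(x+y) = k·sinh x satisfies y ≤ ((k−1)/(k+1))·x = (δ/2)·x. -/
theorem statement16 (δ k : ℝ) (hδ : 0 < δ ∧ δ ≤ Real.sqrt 5 - 1)
    (hk : k = (2 + δ) / (2 - δ)) :
    (k - 1) / (k + 1) = δ / 2 ∧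
    ∀ x ≥ (0 : ℝ), ∀ y ≥ (0 : ℝ),
      k * y + Real.sinh (x + y) = k * Real.sinh x →
      y ≤ (k - 1) / (k + 1) * x := by
  obtain ⟨hδ0, hδ5⟩ := hδ
  have hs5 : Real.sqrt 5 ^ 2 = 5 := Real.sq_sqrt (by norm_num)
  have hs5n : 0 ≤ Real.sqrt 5 := Real.sqrt_nonneg 5
  have hδ2 : δ < 2 := by nlinarith
  have h2δ : (0:ℝ) < 2 - δ := by linarith
  set c : ℝ := δ / 2 with hc
  have hc0 : 0 < c := by positivity
  have hc1 : c + c ^ 2 ≤ 1 := by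
    have : δ ^ 2 + 2 * δ ≤ 4 := by nlinarith
    rw [hc]; nlinarith
  have hkc : k * (1 - c) = 1 + c := by
    rw [hk, hc]; field_simp
  have hcl1 : c < 1 := by nlinarith
  have hk1 : 1 < k := by nlinarith
  have hfrac : (k - 1) / (k + 1) = δ / 2 := by
    rw [div_eq_iff (by linarith : k + 1 ≠ 0)]
    rw [hc] at hkc; linarith [hkc]
  refine ⟨hfrac, ?_⟩
  intro x hx y hy heq
  rw [hfrac, ← hc]
  by_contra hcon
  push_neg at hcon
  have hG := keyH c hc0 hc1 x hx
  -- 0 ≤ (1+c)*c*x + (1-c)*sinh((1+c)*x) - (1+c)*sinh x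
  have hGk : k * Real.sinh x ≤ k * c * x + Real.sinh (x + c * x) := by
    have h1c : (0:ℝ) < 1 - c := by linarith
    have hx1 : (1+c)*x = x + c*x := by ring
    rw [hx1] at hG
    have hA : (1-c) * (k*c*x + Real.sinh (x+c*x) - k*Real.sinh x)
        = (1+c)*c*x + (1-c)*Real.sinh (x+c*x) - (1+c)*Real.sinh x := by
      linear_combination (c*x - Real.sinh x) * hkc
    rw [← hA] at hG
    nlinarith [hG]
  have hsinh : Real.sinh (x + c * x) < Real.sinh (x + y) :=
    Real.sinh_lt_sinh.2 (by linarith)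
  have hky : k * c * x < k * y := by
    have := mul_lt_mul_of_pos_left hcon (by linarith : (0:ℝ) < k)
    linarith [this]
  linarith [hGk, hsinh, hky, heq.le, heq.ge]
end

section
/- Let k > 2 + √5. Then there exists r > 0 such that for all x ∈ (0, r), k·((k−1)/(k+1))·x + sinh(x + ((k−1)/(k+1))·x) − k·sinh x < 0; consequently, any y ≥ 0 with k·y + sinh(x + y) = k·sinh x satisfies y > ((k − 1)/(k + 1))·x. Hence for interface strength δ = 2(k−1)/(k+1) > √5 − 1, the estimate y ≤ (δ/2)·x fails for all sufficiently small x > 0. -/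
/-!
With `c = (k-1)/(k+1)` the linear terms of `k c x + sinh((1+c) x) - k sinh x` cancel, and its
cubic coefficient `((1+c)^3 - k)/6` is negative exactly when `k > 2 + √5`; so the expression is
negative for small `x > 0`. Since `y ↦ k y + sinh(x + y)` is strictly increasing, the solution `y`
of `k y + sinh(x + y) = k sinh x` must then exceed `c x`.
-/

open Real Filter Topology Set

theorem abs_sinh_sub_cubic_le {t : ℝ} (ht : |t| ≤ 1) :
    |sinh t - (t + t ^ 3 / 6)| ≤ |t| ^ 5 / 100 := by
  have hpos := Real.exp_bound ht (n := 5) (by norm_num)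
  have hneg := Real.exp_bound (x := -t) (by rwa [abs_neg]) (n := 5) (by norm_num)
  norm_num [Finset.sum_range_succ, Nat.factorial, abs_neg] at hpos hneg
  have hsplit : sinh t - (t + t ^ 3 / 6)
      = ((exp t - (1 + t + t ^ 2 / 2 + t ^ 3 / 6 + t ^ 4 / 24))
        - (exp (-t) - (1 + -t + t ^ 2 / 2 + -t ^ 3 / 6 + t ^ 4 / 24))) / 2 := by
    rw [sinh_eq]; ring
  rw [hsplit, abs_le]
  rw [abs_le] at hpos hneg
  constructor <;> linarith [hpos.1, hpos.2, hneg.1, hneg.2]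

theorem eventually_mul_add_sinh_sub_mul_sinh_neg {k c : ℝ} (hc : 0 ≤ c)
    (hlin : k * c + (1 + c) = k) (hcube : (1 + c) ^ 3 < k) :
    ∀ᶠ x in 𝓝[>] 0, k * (c * x) + sinh (x + c * x) - k * sinh x < 0 := by
  set A := (k - (1 + c) ^ 3) / 6
  set B := ((1 + c) ^ 5 + k) / 100
  have hA : 0 < A := by positivity
  have hk : 0 ≤ k := by nlinarith [pow_pos (by linarith : (0 : ℝ) < 1 + c) 3]
  have hsmall : ∀ᶠ x in 𝓝 (0 : ℝ), (1 + c) * x < 1 :=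
    (by fun_prop : Continuous fun x : ℝ => (1 + c) * x).continuousAt.eventually_lt
      continuousAt_const (by simp)
  have hcubic_dominates : ∀ᶠ x in 𝓝 (0 : ℝ), B * x ^ 2 < A :=
    (by fun_prop : Continuous fun x : ℝ => B * x ^ 2).continuousAt.eventually_lt
      continuousAt_const (by simpa using hA)
  filter_upwards [nhdsWithin_le_nhds hsmall, nhdsWithin_le_nhds hcubic_dominates, self_mem_nhdsWithin]
    with x hx1 hBA (hx0 : 0 < x)
  have hcx : |(1 + c) * x| ≤ 1 := by rw [abs_of_nonneg (by positivity)]; linarith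
  have hx : |x| ≤ 1 := by rw [abs_of_pos hx0]; nlinarith
  have hup := (abs_le.1 (abs_sinh_sub_cubic_le hcx)).2
  have hlow := (abs_le.1 (abs_sinh_sub_cubic_le hx)).1
  rw [abs_of_nonneg (by positivity)] at hup
  rw [abs_of_pos hx0] at hlow
  calc k * (c * x) + sinh (x + c * x) - k * sinh x
      ≤ k * (c * x) + ((1 + c) * x + ((1 + c) * x) ^ 3 / 6 + ((1 + c) * x) ^ 5 / 100)
          - k * (x + x ^ 3 / 6 - x ^ 5 / 100) := by
        rw [show x + c * x = (1 + c) * x by ring]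
        nlinarith
    _ = x ^ 3 * (B * x ^ 2 - A) := by linear_combination x * hlin
    _ < 0 := mul_neg_of_pos_of_neg (by positivity) (by linarith)

theorem strictMono_mul_add_sinh {k : ℝ} (hk : 0 ≤ k) (x : ℝ) :
    StrictMono fun y => k * y + sinh (x + y) :=
  (monotone_id.const_mul hk).add_strictMono (sinh_strictMono.comp (strictMono_id.const_add x))

/-- `(k+1)^3 - 8k^2 = (k-1)(k^2-4k-1)`, and `2 + √5` is the largest root of `k^2 - 4k - 1`. -/
theorem one_add_div_cube_lt {k : ℝ} (hk : 2 + √5 < k) : (1 + (k - 1) / (k + 1)) ^ 3 < k := by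
  have hk2 : 2 < k := by linarith [sqrt_nonneg 5]
  have hquad : 0 < k ^ 2 - 4 * k - 1 := by
    nlinarith [sq_sqrt (show (0 : ℝ) ≤ 5 by norm_num), sqrt_nonneg 5]
  rw [show 1 + (k - 1) / (k + 1) = 2 * k / (k + 1) by field_simp; ring, div_pow,
    div_lt_iff₀ (by positivity)]
  nlinarith [mul_pos (mul_pos (by linarith : (0 : ℝ) < k) (by linarith : (0 : ℝ) < k - 1)) hquad]

/-- Sharpness of the bound δ ≤ √5 − 1 in Lemma `lem:bestC0`: for k > 2 + √5 the
estimate y ≤ ((k−1)/(k+1))·x = (δ/2)·x fails for all sufficiently small x > 0. -/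
theorem statement17 (k : ℝ) (hk : 2 + Real.sqrt 5 < k) :
    ∃ r > (0 : ℝ), ∀ x ∈ Set.Ioo (0 : ℝ) r,
      (k * ((k - 1) / (k + 1) * x) + Real.sinh (x + (k - 1) / (k + 1) * x)
          - k * Real.sinh x < 0) ∧
      ∀ y ≥ (0 : ℝ), k * y + Real.sinh (x + y) = k * Real.sinh x →
        (k - 1) / (k + 1) * x < y := by
  have hk2 : 2 < k := by linarith [sqrt_nonneg 5]
  have hcube := one_add_div_cube_lt hk
  set c := (k - 1) / (k + 1) with hc
  have hc0 : 0 ≤ c := div_nonneg (by linarith) (by linarith)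
  have hlin : k * c + (1 + c) = k := by rw [hc]; field_simp; ring
  obtain ⟨r, hr, hneg⟩ := mem_nhdsGT_iff_exists_Ioo_subset.1
    (eventually_mul_add_sinh_sub_mul_sinh_neg hc0 hlin hcube)
  refine ⟨r, hr, fun x hx => ⟨hneg hx, fun y _ hy => ?_⟩⟩
  have hfx : k * (c * x) + sinh (x + c * x) - k * sinh x < 0 := hneg hx
  have hlt : k * (c * x) + sinh (x + c * x) < k * y + sinh (x + y) := by linarith
  exact (strictMono_mul_add_sinh (by linarith) x).lt_iff_lt.1 hlt
end

section
/- Let k > 1, x > 0 and y ≥ 0 satisfy k·y + sinh(x + y) = k·sinh x. Then y·(k + cosh x) ≤ (k − 1)·sinh x; equivalently, y ≤ Θ·(δ/2)·x where δ = 2(k−1)/(k+1) and Θ = ((k+1)/(k + cosh x))·(sinh x / x). -/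
/-- Refined reflected-wave estimate (Lemma `lem:bestC0`, second part): any nonnegative
solution y of k·y + sinh(x+y) = k·sinh x satisfies y·(k + cosh x) ≤ (k−1)·sinh x,
equivalently y ≤ Θ·(δ/2)·x with Θ = ((k+1)/(k + cosh x))·(sinh x / x). -/
theorem statement18 (k x y : ℝ) (hk : 1 < k) (hx : 0 < x) (hy : 0 ≤ y)
    (heq : k * y + Real.sinh (x + y) = k * Real.sinh x) :
    y * (k + Real.cosh x) ≤ (k - 1) * Real.sinh x ∧
      y ≤ (k + 1) / (k + Real.cosh x) * (Real.sinh x / x)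
            * (2 * (k - 1) / (k + 1) / 2) * x := by
  have h1 : Real.sinh (x + y) = Real.sinh x * Real.cosh y + Real.cosh x * Real.sinh y :=
    Real.sinh_add x y
  have h2 : 1 ≤ Real.cosh y := Real.one_le_cosh y
  have h3 : y ≤ Real.sinh y := Real.self_le_sinh_iff.mpr hy
  have h4 : 0 < Real.sinh x := lt_of_lt_of_le hx (Real.self_le_sinh_iff.mpr hx.le)
  have h5 : 0 < Real.cosh x := Real.cosh_pos x
  have key : y * (k + Real.cosh x) ≤ (k - 1) * Real.sinh x := by nlinarith
  refine ⟨key, ?_⟩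
  have hpos : 0 < k + Real.cosh x := by linarith
  have hk1 : (0:ℝ) < k + 1 := by linarith
  have hrw : (k + 1) / (k + Real.cosh x) * (Real.sinh x / x)
      * (2 * (k - 1) / (k + 1) / 2) * x = (k - 1) * Real.sinh x / (k + Real.cosh x) := by
    field_simp
  rw [hrw, le_div_iff₀ hpos]
  exact key
end

section
/- Let k > 1. Then (k + 1)·sinh z ≤ z·(k + cosh z) holds for all z > 0 if and only if k ≤ 2. Equivalently, the damping factor Θ(δ, z) = ((k+1)/(k + cosh z))·(sinh z / z) satisfies Θ(δ, z) ≤ 1 for all z > 0 if and only if k ≤ 2, i.e. if and only if the interface strength δ = 2(k−1)/(k+1) satisfies δ ≤ 2/3. -/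
open Real

lemma aux1 (x : ℝ) (hx : 0 ≤ x) : Real.sinh x ≤ x * Real.cosh x := by
  have hmono : Monotone (fun x : ℝ => x * Real.cosh x - Real.sinh x) := by
    apply monotone_of_deriv_nonneg
    · exact (differentiable_id.mul Real.differentiable_cosh).sub Real.differentiable_sinh
    · intro y
      have h : HasDerivAt (fun x : ℝ => x * Real.cosh x - Real.sinh x)
          (1 * Real.cosh y + y * Real.sinh y - Real.cosh y) y :=
        ((hasDerivAt_id y).mul (Real.hasDerivAt_cosh y)).sub (Real.hasDerivAt_sinh y)
      rw [h.deriv]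
      have : y * Real.sinh y ≥ 0 := by
        rcases le_or_gt 0 y with h' | h'
        · exact mul_nonneg h' (Real.sinh_nonneg_iff.mpr h')
        · have hs : Real.sinh y ≤ 0 := Real.sinh_nonpos_iff.mpr h'.le
          nlinarith
      linarith
  have := hmono hx
  simpa using this

lemma aux2 (z : ℝ) : 0 ≤ z * Real.sinh z - 2 * Real.cosh z + 2 := by
  have h1 : z * Real.sinh z = |z| * Real.sinh |z| := by
    rcases le_or_gt 0 z with h | h
    · rw [abs_of_nonneg h]
    · rw [abs_of_neg h, Real.sinh_neg]; ring
  have h2 : Real.cosh z = Real.cosh |z| := (Real.cosh_abs z).symm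
  rw [h1, h2]
  set u := |z| / 2 with hu
  have hu0 : 0 ≤ u := by positivity
  have h3 : |z| = 2 * u := by rw [hu]; ring
  rw [h3, Real.sinh_two_mul, Real.cosh_two_mul]
  have h4 := aux1 u hu0
  have h5 : 0 ≤ Real.sinh u := Real.sinh_nonneg_iff.mpr hu0
  have h6 : Real.cosh u ^ 2 = Real.sinh u ^ 2 + 1 := Real.cosh_sq u
  nlinarith [mul_nonneg h5 (sub_nonneg.mpr h4)]

lemma aux3 (z : ℝ) (hz : 0 ≤ z) : 3 * Real.sinh z ≤ z * Real.cosh z + 2 * z := by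
  have hmono : Monotone (fun z : ℝ => z * Real.cosh z + 2 * z - 3 * Real.sinh z) := by
    apply monotone_of_deriv_nonneg
    · exact ((differentiable_id.mul Real.differentiable_cosh).add
        (differentiable_const (2:ℝ) |>.mul differentiable_id)).sub
        ((differentiable_const (3:ℝ)).mul Real.differentiable_sinh)
    · intro y
      have h : HasDerivAt (fun z : ℝ => z * Real.cosh z + 2 * z - 3 * Real.sinh z)
          ((1 * Real.cosh y + y * Real.sinh y) + 2 * 1 - 3 * Real.cosh y) y := by
        exact (((hasDerivAt_id y).mul (Real.hasDerivAt_cosh y)).add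
          ((hasDerivAt_id y).const_mul 2)).sub ((Real.hasDerivAt_sinh y).const_mul 3)
      rw [h.deriv]
      have := aux2 y
      linarith
  have := hmono hz
  simpa using this

lemma cosh_upper (z : ℝ) (h0 : 0 ≤ z) (h1 : z ≤ 1) :
    Real.cosh z ≤ 1 + z ^ 2 / 2 + 5 * z ^ 4 / 96 := by
  have hz : |z| ≤ 1 := by rw [abs_of_nonneg h0]; exact h1
  have hz' : |(-z)| ≤ 1 := by rwa [abs_neg]
  have e1 := Real.exp_bound hz (n := 4) (by norm_num)
  have e2 := Real.exp_bound hz' (n := 4) (by norm_num)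
  rw [Real.cosh_eq]
  have s1 : ∑ m ∈ Finset.range 4, z ^ m / m.factorial = 1 + z + z^2/2 + z^3/6 := by
    simp [Finset.sum_range_succ, Nat.factorial]; try ring
  have s2 : ∑ m ∈ Finset.range 4, (-z) ^ m / m.factorial = 1 - z + z^2/2 - z^3/6 := by
    simp [Finset.sum_range_succ, Nat.factorial]; try ring
  rw [s1] at e1; rw [s2] at e2
  rw [abs_of_nonneg h0] at e1
  rw [abs_neg, abs_of_nonneg h0] at e2
  norm_num [Nat.factorial] at e1 e2
  obtain ⟨_, b1r⟩ := abs_le.mp e1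
  obtain ⟨_, b2r⟩ := abs_le.mp e2
  nlinarith [b1r, b2r]

lemma sinh_lower (z : ℝ) (h0 : 0 ≤ z) (h1 : z ≤ 1) :
    z + z ^ 3 / 6 - 5 * z ^ 4 / 96 ≤ Real.sinh z := by
  have hz : |z| ≤ 1 := by rw [abs_of_nonneg h0]; exact h1
  have hz' : |(-z)| ≤ 1 := by rwa [abs_neg]
  have e1 := Real.exp_bound hz (n := 4) (by norm_num)
  have e2 := Real.exp_bound hz' (n := 4) (by norm_num)
  rw [Real.sinh_eq]
  have s1 : ∑ m ∈ Finset.range 4, z ^ m / m.factorial = 1 + z + z^2/2 + z^3/6 := by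
    simp [Finset.sum_range_succ, Nat.factorial]; try ring
  have s2 : ∑ m ∈ Finset.range 4, (-z) ^ m / m.factorial = 1 - z + z^2/2 - z^3/6 := by
    simp [Finset.sum_range_succ, Nat.factorial]; try ring
  rw [s1] at e1; rw [s2] at e2
  rw [abs_of_nonneg h0] at e1
  rw [abs_neg, abs_of_nonneg h0] at e2
  norm_num [Nat.factorial] at e1 e2
  obtain ⟨b1l, _⟩ := abs_le.mp e1
  obtain ⟨_, b2r⟩ := abs_le.mp e2
  nlinarith [b1l, b2r]

lemma key (k : ℝ) (hk : 1 < k) :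
    (∀ z > (0 : ℝ), (k + 1) * Real.sinh z ≤ z * (k + Real.cosh z)) ↔ k ≤ 2 := by
  constructor
  · intro h
    by_contra hk2
    push_neg at hk2
    set z := min 1 ((k - 2) / (k + 2)) with hzdef
    have hk2' : 0 < k - 2 := by linarith
    have hkp : 0 < k + 2 := by linarith
    have hz0 : 0 < z := lt_min one_pos (div_pos hk2' hkp)
    have hz1 : z ≤ 1 := min_le_left _ _
    have hz2 : z * (k + 2) ≤ k - 2 := by
      have := min_le_right 1 ((k - 2) / (k + 2))
      calc z * (k + 2) ≤ ((k - 2) / (k + 2)) * (k + 2) := by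
            exact mul_le_mul_of_nonneg_right this hkp.le
        _ = k - 2 := by field_simp
    have hc := cosh_upper z hz0.le hz1
    have hs := sinh_lower z hz0.le hz1
    have hineq := h z hz0
    have hk1 : (0:ℝ) < k + 1 := by linarith
    have step1 : (k + 1) * (z + z ^ 3 / 6 - 5 * z ^ 4 / 96) ≤ z * (k + (1 + z ^ 2 / 2 + 5 * z ^ 4 / 96)) := by
      calc (k + 1) * (z + z ^ 3 / 6 - 5 * z ^ 4 / 96) ≤ (k + 1) * Real.sinh z :=
            mul_le_mul_of_nonneg_left hs hk1.le
        _ ≤ z * (k + Real.cosh z) := hineq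
        _ ≤ z * (k + (1 + z ^ 2 / 2 + 5 * z ^ 4 / 96)) := by nlinarith
    nlinarith [mul_le_mul_of_nonneg_left hz2 (show (0:ℝ) ≤ 5*z^3/96 by positivity),
      mul_le_mul_of_nonneg_left hz1 (show (0:ℝ) ≤ 5*z^4/96 by positivity),
      mul_pos hk2' (mul_pos hz0 (mul_pos hz0 hz0)), step1]
  · intro hk2 z hz
    have h1 := aux3 z hz.le
    have h2 : Real.sinh z - z ≥ 0 := by
      have := Real.self_le_sinh_iff.mpr hz.le
      linarith
    have h3 : k * (Real.sinh z - z) ≤ 2 * (Real.sinh z - z) :=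
      mul_le_mul_of_nonneg_right hk2 h2
    nlinarith

/-- The damping factor Θ(δ, z) = ((k+1)/(k + cosh z))·(sinh z / z) is ≤ 1 for all z > 0
iff k ≤ 2, i.e. iff the interface strength δ = 2(k−1)/(k+1) is ≤ 2/3. -/
theorem statement19 (k : ℝ) (hk : 1 < k) :
    ((∀ z > (0 : ℝ), (k + 1) * Real.sinh z ≤ z * (k + Real.cosh z)) ↔ k ≤ 2) ∧
    ((∀ z > (0 : ℝ),
        (k + 1) / (k + Real.cosh z) * (Real.sinh z / z) ≤ 1) ↔ k ≤ 2) ∧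
    (k ≤ 2 ↔ 2 * (k - 1) / (k + 1) ≤ 2 / 3) := by
  have hkey := key k hk
  refine ⟨hkey, ?_, ?_⟩
  · rw [← hkey]
    apply forall_congr'
    intro z
    apply imp_congr_right
    intro hz
    have hden : 0 < k + Real.cosh z := by
      have := Real.cosh_pos (x := z); linarith
    rw [div_mul_div_comm, div_le_one (by positivity)]
    constructor <;> intro h <;> nlinarith
  · have hk1 : (0:ℝ) < k + 1 := by linarith
    rw [div_le_div_iff₀ hk1 (by norm_num)]
    constructor <;> intro h <;> linarith
end
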